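/- arXiv:1609.05126 — 2 statements merged into one kernel-verified Lean document; each statement's English description precedes it below -/
import Mathlib

section
/- The degree-10 symmetric polynomial D(u,v) = 45u¹⁰ + 906u⁹v + 25889u⁸v² + 127768u⁷v³ + 582402u⁶v⁴ − 207076u⁵v⁵ + 582402u⁴v⁶ + 127768u³v⁷ + 25889u²v⁸ + 906uv⁹ + 45v¹⁰ is strictly positive for all (u,v) ∈ ℝ₊² with (u,v) ≠ (0,0), where ℝ₊ denotes the nonnegative reals. -/
theorem deg10_poly_pos (u v : ℝ) (hu : 0 ≤ u) (hv : 0 ≤ v)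
    (h : ¬(u = 0 ∧ v = 0)) :
    0 < 45*u^10 + 906*u^9*v + 25889*u^8*v^2 + 127768*u^7*v^3
        + 582402*u^6*v^4 - 207076*u^5*v^5 + 582402*u^4*v^6
        + 127768*u^3*v^7 + 25889*u^2*v^8 + 906*u*v^9 + 45*v^10 := by
  have e : 45*u^10 + 906*u^9*v + 25889*u^8*v^2 + 127768*u^7*v^3
        + 582402*u^6*v^4 - 207076*u^5*v^5 + 582402*u^4*v^6
        + 127768*u^3*v^7 + 25889*u^2*v^8 + 906*u*v^9 + 45*v^10
      = 45*u^10 + 906*u^9*v + 25889*u^8*v^2 + 127768*u^7*v^3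
        + 957728*u^5*v^5 + 127768*u^3*v^7 + 25889*u^2*v^8
        + 906*u*v^9 + 45*v^10 + 582402*(u^4*v^4*(u-v)^2) := by ring
  rw [e]
  have h2 : 0 ≤ 906*u^9*v := by positivity
  have h3 : 0 ≤ 25889*u^8*v^2 := by positivity
  have h4 : 0 ≤ 127768*u^7*v^3 := by positivity
  have h5 : 0 ≤ 957728*u^5*v^5 := by positivity
  have h6 : 0 ≤ 127768*u^3*v^7 := by positivity
  have h7 : 0 ≤ 25889*u^2*v^8 := by positivity
  have h8 : 0 ≤ 906*u*v^9 := by positivity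
  have h9 : 0 ≤ 582402*(u^4*v^4*(u-v)^2) := by positivity
  rcases eq_or_lt_of_le hu with hu0 | hu0
  · rcases eq_or_lt_of_le hv with hv0 | hv0
    · exact absurd ⟨hu0.symm, hv0.symm⟩ h
    · have : 0 < 45*v^10 := by positivity
      have h1 : 0 ≤ 45*u^10 := by positivity
      linarith
  · have h1 : 0 < 45*u^10 := by positivity
    have h10 : 0 ≤ 45*v^10 := by positivity
    linarith
end

section
/- Let a ∈ ℝ and on ℂⁿ ≅ ℝ²ⁿ define d_M(x,y) = ∑_{j=1}^n (x_j − a y_j)²/(1+a²) and d_N(x,y) = ∑_{j=1}^n y_j². Then for each j, ∂d_M/∂z_j = (1+ia)(x_j − a y_j)/(1+a²) and ∂d_N/∂z_j = −i y_j, and consequently |Re⟨(∂d_M/∂z)_r, (∂d_N/∂z)_r⟩| ≤ (|a|/√(1+a²))·(d_{M,r} d_{N,r})^{1/2}, where (∂f/∂z)_r = (∂f/∂z₁,…,∂f/∂z_r), d_{M,r} = ∑_{j=1}^r (x_j − a y_j)²/(1+a²), d_{N,r} = ∑_{j=1}^r y_j², and ⟨·,·⟩ is the standard Hermitian inner product on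 ℂʳ. -/
open Complex

/-- Partial derivative in the direction `x_j`, identifying `ℂⁿ ≅ ℝⁿ × ℝⁿ`
via `z_j = x_j + i y_j`. -/
noncomputable def pderivX {n : ℕ} (j : Fin n)
    (f : (Fin n → ℝ) × (Fin n → ℝ) → ℝ) : (Fin n → ℝ) × (Fin n → ℝ) → ℝ :=
  fun p => deriv (fun t => f (Function.update p.1 j t, p.2)) (p.1 j)

/-- Partial derivative in the direction `y_j`. -/
noncomputable def pderivY {n : ℕ} (j : Fin n)
    (f : (Fin n → ℝ) × (Fin n → ℝ) → ℝ) : (Fin n → ℝ) × (Fin n → ℝ) → ℝ :=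
  fun p => deriv (fun t => f (p.1, Function.update p.2 j t)) (p.2 j)

/-- The holomorphic derivative `∂f/∂z_j = (1/2)(∂f/∂x_j − i ∂f/∂y_j)`. -/
noncomputable def dz {n : ℕ} (j : Fin n)
    (f : (Fin n → ℝ) × (Fin n → ℝ) → ℝ) (p : (Fin n → ℝ) × (Fin n → ℝ)) : ℂ :=
  (1/2 : ℂ) * ((pderivX j f p : ℂ) - Complex.I * (pderivY j f p : ℂ))

/-! Both `d_M` and `d_N` are sums of functions of a single coordinate pair `(x_j, y_j)`, so
`∂/∂x_j` and `∂/∂y_j` only see the `j`-th summand. With `u_j = x_j - a y_j`, the `j`-th term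
of the inner product is `(1 + ia) u_j · i y_j / (1 + a²)`, whose real part is
`-a u_j y_j / (1 + a²)`; Cauchy–Schwarz for `∑ u_j y_j` then gives the estimate. -/

open Finset

theorem hasDerivAt_sum_update {ι 𝕜 F : Type*} [Fintype ι] [DecidableEq ι]
    [NontriviallyNormedField 𝕜] [NormedAddCommGroup F] [NormedSpace 𝕜 F] (g : ι → 𝕜 → F)
    (x : ι → 𝕜) (j : ι) {g' : F} (h : HasDerivAt (g j) g' (x j)) :
    HasDerivAt (fun t => ∑ i, g i (Function.update x j t i)) g' (x j) := by
  have hsplit : (fun t => ∑ i, g i (Function.update x j t i)) =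
      fun t => g j t + ∑ i ∈ univ.erase j, g i (x i) := by
    funext t
    rw [← add_sum_erase _ _ (mem_univ j), Function.update_self]
    congr 1
    exact sum_congr rfl fun i hi => by rw [Function.update_of_ne (ne_of_mem_erase hi)]
  rw [hsplit]
  exact h.add_const _

section

variable {n : ℕ}

/-- `d_M`, the squared distance to the totally real subspace `M = (a + i)ℝⁿ`. -/
noncomputable def sqDistM (a : ℝ) : (Fin n → ℝ) × (Fin n → ℝ) → ℝ :=
  fun p => ∑ j, (p.1 j - a * p.2 j) ^ 2 / (1 + a ^ 2)

/-- `d_N`, the squared distance to `N = ℝⁿ`. -/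
def sqDistN : (Fin n → ℝ) × (Fin n → ℝ) → ℝ :=
  fun p => ∑ j, p.2 j ^ 2

theorem pderivX_sqDistM (a : ℝ) (p : (Fin n → ℝ) × (Fin n → ℝ)) (j : Fin n) :
    pderivX j (sqDistM a) p = 2 * (p.1 j - a * p.2 j) / (1 + a ^ 2) := by
  refine (hasDerivAt_sum_update (fun i s => (s - a * p.2 i) ^ 2 / (1 + a ^ 2)) p.1 j ?_).deriv
  exact ((((hasDerivAt_id' _).sub_const (a * p.2 j)).fun_pow 2).div_const _).congr_deriv
    (by ring)

theorem pderivY_sqDistM (a : ℝ) (p : (Fin n → ℝ) × (Fin n → ℝ)) (j : Fin n) :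
    pderivY j (sqDistM a) p = -2 * a * (p.1 j - a * p.2 j) / (1 + a ^ 2) := by
  refine (hasDerivAt_sum_update (fun i s => (p.1 i - a * s) ^ 2 / (1 + a ^ 2)) p.2 j ?_).deriv
  exact (((((hasDerivAt_id' _).const_mul a).const_sub (p.1 j)).fun_pow 2).div_const _).congr_deriv
    (by ring)

theorem pderivX_sqDistN (p : (Fin n → ℝ) × (Fin n → ℝ)) (j : Fin n) :
    pderivX j sqDistN p = 0 :=
  deriv_const _ (∑ i, p.2 i ^ 2)

theorem pderivY_sqDistN (p : (Fin n → ℝ) × (Fin n → ℝ)) (j : Fin n) :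
    pderivY j sqDistN p = 2 * p.2 j := by
  refine (hasDerivAt_sum_update (fun _ s => s ^ 2) p.2 j ?_).deriv
  simpa using hasDerivAt_pow 2 (p.2 j)

theorem dz_sqDistM (a : ℝ) (p : (Fin n → ℝ) × (Fin n → ℝ)) (j : Fin n) :
    dz j (sqDistM a) p =
      (1 + Complex.I * a) * ((p.1 j - a * p.2 j : ℝ) : ℂ) / (1 + (a : ℂ) ^ 2) := by
  have hc : (1 + (a : ℂ) ^ 2) ≠ 0 := by exact_mod_cast (by positivity : (1 + a ^ 2 : ℝ) ≠ 0)
  rw [dz, pderivX_sqDistM, pderivY_sqDistM]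
  push_cast
  field_simp
  ring

theorem dz_sqDistN (p : (Fin n → ℝ) × (Fin n → ℝ)) (j : Fin n) :
    dz j sqDistN p = -Complex.I * (p.2 j : ℂ) := by
  rw [dz, pderivX_sqDistN, pderivY_sqDistN]
  push_cast
  ring

end

theorem re_mul_conj_neg_I_mul (a u v : ℝ) :
    ((1 + Complex.I * a) * (u : ℂ) / (1 + (a : ℂ) ^ 2) *
      (starRingEnd ℂ) (-Complex.I * v)).re = -a * (u * v) / (1 + a ^ 2) := by
  have hc : (1 + (a : ℂ) ^ 2) = ((1 + a ^ 2 : ℝ) : ℂ) := by push_cast; rfl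
  rw [hc, div_mul_eq_mul_div, Complex.div_ofReal_re]
  congr 1
  simp [mul_assoc]

theorem abs_sum_neg_mul_div_le {ι : Type*} (s : Finset ι) (u v : ι → ℝ) (a : ℝ) :
    |∑ j ∈ s, -a * (u j * v j) / (1 + a ^ 2)| ≤
      |a| / √(1 + a ^ 2) * √((∑ j ∈ s, u j ^ 2 / (1 + a ^ 2)) * ∑ j ∈ s, v j ^ 2) := by
  have hc : 0 < 1 + a ^ 2 := by positivity
  calc |∑ j ∈ s, -a * (u j * v j) / (1 + a ^ 2)|
      = |a| / (1 + a ^ 2) * |∑ j ∈ s, u j * v j| := by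
        rw [← sum_div, ← mul_sum, abs_div, abs_mul, abs_neg, abs_of_pos hc]
        ring
    _ ≤ |a| / (1 + a ^ 2) * √((∑ j ∈ s, u j ^ 2) * ∑ j ∈ s, v j ^ 2) := by
        gcongr
        exact Real.abs_le_sqrt (sum_mul_sq_le_sq_mul_sq s u v)
    _ = |a| / √(1 + a ^ 2) * √((∑ j ∈ s, u j ^ 2 / (1 + a ^ 2)) * ∑ j ∈ s, v j ^ 2) := by
        rw [← sum_div, div_mul_eq_mul_div (∑ j ∈ s, u j ^ 2), Real.sqrt_div' _ hc.le]
        field_simp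
        rw [Real.sq_sqrt hc.le]
        ring

/-- Holomorphic derivatives of `d_M` and `d_N` for `M = (aI+iI)ℝⁿ`, `N = ℝⁿ`,
and the resulting Cauchy–Schwarz estimate on
`Re⟨(∂d_M/∂z)_r, (∂d_N/∂z)_r⟩`. -/
theorem dz_dM_dN_and_estimate (n : ℕ) (a : ℝ) :
    let dM : (Fin n → ℝ) × (Fin n → ℝ) → ℝ :=
      fun p => ∑ j, (p.1 j - a * p.2 j) ^ 2 / (1 + a ^ 2)
    let dN : (Fin n → ℝ) × (Fin n → ℝ) → ℝ := fun p => ∑ j, (p.2 j) ^ 2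
    ∀ p : (Fin n → ℝ) × (Fin n → ℝ),
      (∀ j : Fin n, dz j dM p =
          (1 + Complex.I * (a : ℂ)) * ((p.1 j - a * p.2 j : ℝ) : ℂ) / (1 + (a : ℂ) ^ 2)) ∧
      (∀ j : Fin n, dz j dN p = -Complex.I * ((p.2 j : ℝ) : ℂ)) ∧
      (∀ r : ℕ, 1 ≤ r → r ≤ n →
        |(∑ j ∈ Finset.univ.filter (fun j : Fin n => (j : ℕ) < r),
            dz j dM p * (starRingEnd ℂ) (dz j dN p)).re| ≤
          (|a| / Real.sqrt (1 + a ^ 2)) *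
            Real.sqrt ((∑ j ∈ Finset.univ.filter (fun j : Fin n => (j : ℕ) < r),
                (p.1 j - a * p.2 j) ^ 2 / (1 + a ^ 2)) *
              (∑ j ∈ Finset.univ.filter (fun j : Fin n => (j : ℕ) < r), (p.2 j) ^ 2))) := by
  intro dM dN p
  have hM : ∀ j, dz j dM p = _ := dz_sqDistM a p
  have hN : ∀ j, dz j dN p = _ := dz_sqDistN p
  refine ⟨hM, hN, fun r _ _ => ?_⟩
  simp only [hM, hN, Complex.re_sum, re_mul_conj_neg_I_mul]
  exact abs_sum_neg_mul_div_le _ (fun j => p.1 j - a * p.2 j) p.2 a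
end
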